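/- Let ψ₁, ..., ψ_m : ℝ^d → ℂ and let P be a complex polynomial in m variables with zero constant term. If each ψ_t is Γ-progressive for a closed convex cone Γ (its Fourier transform, as a tempered distribution, is supported in Γ), and all ψ_t are bounded and integrable, then the function x ↦ P(ψ₁(x), ..., ψ_m(x)) is also Γ-progressive. -/

import Mathlib

open MeasureTheory FourierTransform Filter Metric Function
open scoped RealInnerProductSpace Topology ContDiff Convolution

variable {d : ℕ}


noncomputable def bumpSchwartz (φ : ContDiffBump (0 : EuclideanSpace ℝ (Fin d))) :
    SchwartzMap (EuclideanSpace ℝ (Fin d)) ℂ where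
  toFun x := (φ.normed volume x : ℂ)
  smooth' := Complex.ofRealCLM.contDiff.comp (φ.contDiff_normed (n := ⊤))
  decay' := by
    intro k n
    set f : EuclideanSpace ℝ (Fin d) → ℂ := fun x => (φ.normed volume x : ℂ) with hf
    have hcs : HasCompactSupport f := by
      apply HasCompactSupport.comp_left (g := fun r : ℝ => (r : ℂ)) φ.hasCompactSupport_normed
      simp
    have hsm : ContDiff ℝ ∞ f := Complex.ofRealCLM.contDiff.comp (φ.contDiff_normed (n := ⊤))
    have hder : HasCompactSupport (iteratedFDeriv ℝ n f) := hcs.iteratedFDeriv n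
    have hcont : Continuous fun x => ‖x‖ ^ k * ‖iteratedFDeriv ℝ n f x‖ :=
      (continuous_norm.pow k).mul (hsm.continuous_iteratedFDeriv (mod_cast le_top)).norm
    have hcs2 : HasCompactSupport fun x => ‖x‖ ^ k * ‖iteratedFDeriv ℝ n f x‖ :=
      hder.norm.mul_left
    obtain ⟨C, hC⟩ := hcont.bounded_above_of_compact_support hcs2
    exact ⟨C, fun x => (le_abs_self _).trans ((Real.norm_eq_abs _ ▸ hC x))⟩

lemma bumpSchwartz_apply (φ : ContDiffBump (0 : EuclideanSpace ℝ (Fin d))) (x) :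
    bumpSchwartz φ x = (φ.normed volume x : ℂ) := rfl

lemma bump_eq_integral (φ : ContDiffBump (0 : EuclideanSpace ℝ (Fin d)))
    (z : EuclideanSpace ℝ (Fin d)) :
    (φ.normed volume z : ℂ)
      = ∫ η, 𝐞 ⟪η, z⟫ • (𝓕 fun x => (φ.normed volume x : ℂ)) η := by
  have h1 : Integrable (fun x => (φ.normed volume x : ℂ)) := (bumpSchwartz φ).integrable
  have h2 : Integrable (𝓕 fun x => (φ.normed volume x : ℂ)) := by
    have : (𝓕 fun x => (φ.normed volume x : ℂ))
        = (SchwartzMap.fourierTransformCLM ℝ (bumpSchwartz φ)) := by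
      rw [SchwartzMap.fourierTransformCLM_apply]; rfl
    rw [this]
    exact SchwartzMap.integrable _
  have hcont : Continuous (fun x => (φ.normed volume x : ℂ)) :=
    Complex.continuous_ofReal.comp (φ.contDiff_normed (n := 0)).continuous
  have h3 := hcont.fourierInv_fourier_eq h1 h2
  rw [← congrFun h3 z, Real.fourierInv_eq]

lemma bumpFourier_integrable (φ : ContDiffBump (0 : EuclideanSpace ℝ (Fin d))) :
    Integrable (𝓕 fun x => (φ.normed volume x : ℂ)) := by
  have : (𝓕 fun x => (φ.normed volume x : ℂ))
      = (SchwartzMap.fourierTransformCLM ℝ (bumpSchwartz φ)) := by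
    rw [SchwartzMap.fourierTransformCLM_apply]; rfl
  rw [this]
  exact SchwartzMap.integrable _
set_option maxHeartbeats  1000000 in
lemma support_fourier_mul_subset {Γ : Set (EuclideanSpace ℝ (Fin d))}
    (hadd : ∀ a ∈ Γ, ∀ b ∈ Γ, a + b ∈ Γ)
    {f g : EuclideanSpace ℝ (Fin d) → ℂ} (hfi : Integrable f) (hgi : Integrable g)
    {Cf : ℝ} (hfb : ∀ x, ‖f x‖ ≤ Cf)
    (hFf : Function.support (𝓕 f) ⊆ Γ) (hFg : Function.support (𝓕 g) ⊆ Γ) :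
    Function.support (𝓕 fun x => f x * g x) ⊆ Γ := by
  intro ξ hξ
  by_contra hΓ
  apply hξ
  -- the modulated function h
  set h : EuclideanSpace ℝ (Fin d) → ℂ := fun y => 𝐞 (-⟪y, ξ⟫) • f y with hh
  have hhi : Integrable h := (Real.fourierIntegral_convergent_iff ξ).2 hfi
  have hC0 : 0 ≤ Cf := le_trans (norm_nonneg _) (hfb 0)
  have hhb : ∀ y, ‖h y‖ ≤ Cf := by
    intro y; rw [hh]; simpa [Circle.norm_smul] using hfb y
  -- bump sequence
  set φ : ℕ → ContDiffBump (0 : EuclideanSpace ℝ (Fin d)) :=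
    fun i => ⟨(i+1 : ℝ)⁻¹, 2*(i+1 : ℝ)⁻¹, by positivity, by
      nlinarith [inv_pos.2 (by positivity : (0:ℝ) < (i+1:ℝ))]⟩ with hφdef
  -- Step A : convergence
  have hφr : Tendsto (fun i => (φ i).rOut) atTop (𝓝 0) := by
    have : Tendsto (fun i : ℕ => 2 * (i+1 : ℝ)⁻¹) atTop (𝓝 (2 * 0)) :=
      (tendsto_one_div_add_atTop_nhds_zero_nat.congr (by simp [one_div])).const_mul 2
    simpa using this
  have haec : ∀ᵐ x : EuclideanSpace ℝ (Fin d),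
      Tendsto (fun i => ((φ i).normed volume ⋆[ContinuousLinearMap.lsmul ℝ ℝ] h) x)
        atTop (𝓝 (h x)) := by
    apply ContDiffBump.ae_convolution_tendsto_right_of_locallyIntegrable (K := 2) hφr
    · filter_upwards with i
      simp [hφdef]
    · exact hhi.locallyIntegrable
  set C' : ℝ := Cf
  -- continuity of convolutions
  have hconvcont : ∀ i,
      Continuous ((φ i).normed volume ⋆[ContinuousLinearMap.lsmul ℝ ℝ] h) := fun i =>
    HasCompactSupport.continuous_convolution_left _ (φ i).hasCompactSupport_normed
      ((φ i).contDiff_normed (n := 0)).continuous hhi.locallyIntegrable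
  have hconvbd : ∀ i x, ‖((φ i).normed volume ⋆[ContinuousLinearMap.lsmul ℝ ℝ] h) x‖ ≤ Cf := by
    intro i x
    rw [convolution_def]
    calc ‖∫ t, ContinuousLinearMap.lsmul ℝ ℝ ((φ i).normed volume t) (h (x - t))‖
        ≤ ∫ t, (φ i).normed volume t * Cf := by
          apply norm_integral_le_of_norm_le ((φ i).integrable_normed.mul_const Cf)
          filter_upwards with t
          simp only [ContinuousLinearMap.lsmul_apply, norm_smul, Real.norm_eq_abs,
            abs_of_nonneg ((φ i).nonneg_normed t)]
          exact mul_le_mul_of_nonneg_left (hhb _) ((φ i).nonneg_normed t)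
      _ = Cf := by rw [integral_mul_const, (φ i).integral_normed, one_mul]
  -- Step A2 : dominated convergence
  have hTlim : Tendsto
      (fun i => ∫ x, g x * ((φ i).normed volume ⋆[ContinuousLinearMap.lsmul ℝ ℝ] h) x)
      atTop (𝓝 (∫ x, g x * h x)) := by
    apply tendsto_integral_filter_of_dominated_convergence (fun x => ‖g x‖ * Cf)
    · filter_upwards with i
      exact hgi.1.mul (hconvcont i).aestronglyMeasurable
    · filter_upwards with i
      filter_upwards with x
      rw [norm_mul]
      exact mul_le_mul_of_nonneg_left (hconvbd i x) (norm_nonneg _)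
    · exact hgi.norm.mul_const Cf
    · filter_upwards [haec] with x hx
      exact hx.const_mul (g x)
  have hgoal : ∫ x, g x * h x = 𝓕 (fun x => f x * g x) ξ := by
    rw [Real.fourier_eq]
    congr 1
    funext x
    simp only [hh, Circle.smul_def, smul_eq_mul]
    ring
  -- Step B : each term vanishes
  have hzero : ∀ i,
      ∫ x, g x * ((φ i).normed volume ⋆[ContinuousLinearMap.lsmul ℝ ℝ] h) x = 0 := by
    intro i
    set k : EuclideanSpace ℝ (Fin d) → ℝ := (φ i).normed volume with hk
    set K : EuclideanSpace ℝ (Fin d) → ℂ := 𝓕 (fun x => (k x : ℂ)) with hKdef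
    have hKi : Integrable K := bumpFourier_integrable (φ i)
    have hKcont : Continuous K := by
      rw [hKdef]
      exact VectorFourier.fourierIntegral_continuous Real.continuous_fourierChar
        (by exact continuous_inner) ((φ i).integrable_normed.ofReal)
    have hconv_eq : ∀ x, ((φ i).normed volume ⋆[ContinuousLinearMap.lsmul ℝ ℝ] h) x
        = ∫ y, (k (x - y) : ℂ) * h y := by
      intro x
      rw [convolution_def]
      rw [← MeasureTheory.integral_sub_left_eq_self (fun y => (k (x - y) : ℂ) * h y) volume x]
      congr 1
      funext t
      simp only [ContinuousLinearMap.lsmul_apply, sub_sub_cancel, Complex.real_smul]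
      rfl
    have hFfb : ∀ w, ‖𝓕 f w‖ ≤ ∫ y, ‖f y‖ := fun w =>
      VectorFourier.norm_fourierIntegral_le_integral_norm _ _ _ _ _
    have hFcont : Continuous (𝓕 f) :=
      VectorFourier.fourierIntegral_continuous Real.continuous_fourierChar
        (by exact continuous_inner) hfi
    -- the key pointwise inner integral computation
    have key : ∀ x η, (∫ y, (𝐞 ⟪η, x - y⟫ • K η) * h y)
        = 𝐞 ⟪η, x⟫ • (K η * 𝓕 f (ξ + η)) := by
      intro x η
      have hpt : ∀ y, (𝐞 ⟪η, x - y⟫ • K η) * h y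
          = (𝐞 ⟪η, x⟫ : ℂ) * (K η * ((𝐞 (-⟪y, ξ + η⟫) : ℂ) * f y)) := by
        intro y
        have i1 : ⟪η, x - y⟫ = ⟪η, x⟫ + -⟪y, η⟫ := by
          rw [inner_sub_right, real_inner_comm η y]; ring
        have i2 : (-⟪y, ξ + η⟫) = -⟪y, ξ⟫ + -⟪y, η⟫ := by
          rw [inner_add_right]; ring
        rw [i1, i2, AddChar.map_add_eq_mul, AddChar.map_add_eq_mul]
        simp only [hh, Circle.smul_def, Circle.coe_mul, smul_eq_mul]
        ring
      simp only [hpt]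
      rw [integral_const_mul, integral_const_mul, Real.fourier_eq]
      simp only [Circle.smul_def, smul_eq_mul]
    -- first swap (y and η), for fixed x
    have swap1 : ∀ x : EuclideanSpace ℝ (Fin d), (∫ y, (k (x - y) : ℂ) * h y)
        = ∫ η, 𝐞 ⟪η, x⟫ • (K η * 𝓕 f (ξ + η)) := by
      intro x
      have hrw : ∀ y : EuclideanSpace ℝ (Fin d),
          (k (x - y) : ℂ) * h y = ∫ η, (𝐞 ⟪η, x - y⟫ • K η) * h y := by
        intro y
        rw [bump_eq_integral (φ i) (x - y)]
        exact (integral_mul_const _ _).symm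
      have hint1 : Integrable ((fun y η => (𝐞 ⟪η, x - y⟫ • K η) * h y).uncurry)
          (volume.prod volume) := by
        apply Integrable.mono' (hhi.norm.mul_prod hKi.norm)
        · apply AEStronglyMeasurable.mul
          · exact (Continuous.smul
              (Real.continuous_fourierChar.comp
                (continuous_snd.inner (continuous_const.sub continuous_fst)))
              (hKcont.comp continuous_snd)).aestronglyMeasurable
          · exact hhi.1.comp_fst
        · filter_upwards with z
          simp [Function.uncurry, Circle.norm_smul, mul_comm]
      simp only [hrw]
      rw [integral_integral_swap hint1]
      simp only [key]
    have hconv2 : ∀ x : EuclideanSpace ℝ (Fin d),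
        g x * (k ⋆[ContinuousLinearMap.lsmul ℝ ℝ] h) x
        = ∫ η, g x * (𝐞 ⟪η, x⟫ • (K η * 𝓕 f (ξ + η))) := by
      intro x
      rw [hconv_eq x, swap1 x]
      exact (integral_const_mul _ _).symm
    simp only [hconv2]
    set Mf : ℝ := ∫ y, ‖f y‖ with hMf
    have hint2 : Integrable
        ((fun x η => g x * (𝐞 ⟪η, x⟫ • (K η * 𝓕 f (ξ + η)))).uncurry)
        (volume.prod volume) := by
      apply Integrable.mono' (hgi.norm.mul_prod (hKi.norm.mul_const Mf))
      · apply AEStronglyMeasurable.mul hgi.1.comp_fst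
        exact (Continuous.smul
          (Real.continuous_fourierChar.comp (continuous_snd.inner continuous_fst))
          ((hKcont.comp continuous_snd).mul
            (hFcont.comp (continuous_const.add continuous_snd)))).aestronglyMeasurable
      · filter_upwards with z
        simp only [Function.uncurry, norm_mul, Circle.norm_smul]
        exact mul_le_mul_of_nonneg_left
          (mul_le_mul_of_nonneg_left (hFfb _) (norm_nonneg _)) (norm_nonneg _)
    rw [integral_integral_swap hint2]
    have inner2 : ∀ η, (∫ x, g x * (𝐞 ⟪η, x⟫ • (K η * 𝓕 f (ξ + η))))
        = (K η * 𝓕 f (ξ + η)) * 𝓕 g (-η) := by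
      intro η
      have hpt3 : ∀ x, g x * (𝐞 ⟪η, x⟫ • (K η * 𝓕 f (ξ + η)))
          = (K η * 𝓕 f (ξ + η)) * ((𝐞 (-⟪x, -η⟫) : ℂ) * g x) := by
        intro x
        have e : (-⟪x, -η⟫ : ℝ) = ⟪η, x⟫ := by
          rw [inner_neg_right, real_inner_comm x η]; ring
        rw [e]; simp only [Circle.smul_def, smul_eq_mul]; ring
      simp only [hpt3]
      rw [integral_const_mul]
      congr 1
    simp only [inner2]
    have hvan : ∀ η : EuclideanSpace ℝ (Fin d),
        (K η * 𝓕 f (ξ + η)) * 𝓕 g (-η) = 0 := by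
      intro η
      by_cases h1 : 𝓕 f (ξ + η) = 0
      · rw [h1, mul_zero, zero_mul]
      by_cases h2 : 𝓕 g (-η) = 0
      · rw [h2, mul_zero]
      exfalso
      have m1 : ξ + η ∈ Γ := hFf (Function.mem_support.2 h1)
      have m2 : -η ∈ Γ := hFg (Function.mem_support.2 h2)
      have := hadd _ m1 _ m2
      rw [add_neg_cancel_right] at this
      exact hΓ this
    simp only [hvan, integral_zero]
  rw [← hgoal]
  have h0 : Tendsto (fun _ : ℕ => (0:ℂ)) atTop (𝓝 (∫ x, g x * h x)) :=
    hTlim.congr fun i => hzero i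
  exact tendsto_nhds_unique h0 tendsto_const_nhds


theorem polynomial_of_progressive_is_progressive {d m : ℕ}
    (ψ : Fin m → EuclideanSpace ℝ (Fin d) → ℂ)
    (Γ : Set (EuclideanSpace ℝ (Fin d))) (hΓclosed : IsClosed Γ)
    (hΓcone : ∀ γ₁ ∈ Γ, ∀ γ₂ ∈ Γ, ∀ a₁ a₂ : ℝ, 0 ≤ a₁ → 0 ≤ a₂ → a₁ • γ₁ + a₂ • γ₂ ∈ Γ)
    (hbdd : ∀ t, ∃ C, ∀ x, ‖ψ t x‖ ≤ C)
    (hint : ∀ t, Integrable (ψ t))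
    (hprog : ∀ t, Function.support (𝓕 (ψ t)) ⊆ Γ)
    (P : MvPolynomial (Fin m) ℂ) (hP : P.coeff 0 = 0) :
    Function.support (𝓕 fun x => MvPolynomial.eval (fun t => ψ t x) P) ⊆ Γ := by
  have hadd : ∀ a ∈ Γ, ∀ b ∈ Γ, a + b ∈ Γ := by
    intro a ha b hb
    simpa using hΓcone a ha b hb 1 1 zero_le_one zero_le_one
  set Prog : (EuclideanSpace ℝ (Fin d) → ℂ) → Prop :=
    fun u => Integrable u ∧ (∃ C, ∀ x, ‖u x‖ ≤ C) ∧ Function.support (𝓕 u) ⊆ Γ with hProg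
  have prog_mul : ∀ u v, Prog u → Prog v → Prog (fun x => u x * v x) := by
    rintro u v ⟨hui, ⟨Cu, hub⟩, huS⟩ ⟨hvi, ⟨Cv, hvb⟩, hvS⟩
    have hCu : 0 ≤ Cu := (norm_nonneg _).trans (hub 0)
    refine ⟨hvi.bdd_mul hui.1 (c := Cu) (ae_of_all _ hub), ⟨Cu * Cv, ?_⟩,
      support_fourier_mul_subset hadd hui hvi hub huS hvS⟩
    intro x
    rw [norm_mul]
    exact mul_le_mul (hub x) (hvb x) (norm_nonneg _) hCu
  have prog_zero : Prog (fun _ => (0:ℂ)) := by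
    refine ⟨integrable_zero _ _ _, ⟨0, by simp⟩, ?_⟩
    have : (𝓕 fun _ : EuclideanSpace ℝ (Fin d) => (0:ℂ)) = fun _ => 0 := by
      funext w
      simp [Real.fourier_eq]
    rw [this]
    simp
  have prog_smul : ∀ (c : ℂ) u, Prog u → Prog (fun x => c * u x) := by
    rintro c u ⟨hui, ⟨Cu, hub⟩, huS⟩
    refine ⟨hui.const_mul c, ⟨‖c‖ * Cu, fun x => ?_⟩, ?_⟩
    · rw [norm_mul]
      exact mul_le_mul_of_nonneg_left (hub x) (norm_nonneg _)
    · have hfc : (𝓕 fun x => c * u x) = fun w => c * 𝓕 u w := by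
        funext w
        simp only [Real.fourier_eq, Circle.smul_def, smul_eq_mul]
        rw [← integral_const_mul]
        congr 1; funext v; ring
      rw [hfc]
      intro w hw
      exact huS (Function.mem_support.2 (right_ne_zero_of_mul (Function.mem_support.1 hw)))
  have prog_add : ∀ u v, Prog u → Prog v → Prog (fun x => u x + v x) := by
    rintro u v ⟨hui, ⟨Cu, hub⟩, huS⟩ ⟨hvi, ⟨Cv, hvb⟩, hvS⟩
    refine ⟨hui.add hvi, ⟨Cu + Cv, fun x => (norm_add_le _ _).trans (add_le_add (hub x) (hvb x))⟩, ?_⟩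
    have hfa : (𝓕 fun x => u x + v x) = fun w => 𝓕 u w + 𝓕 v w := by
      funext w
      simp only [Real.fourier_eq, smul_add]
      exact integral_add ((Real.fourierIntegral_convergent_iff w).2 hui)
        ((Real.fourierIntegral_convergent_iff w).2 hvi)
    rw [hfa]
    intro w hw
    by_cases h1 : 𝓕 u w = 0
    · have h2 : 𝓕 v w ≠ 0 := by
        intro h2
        exact Function.mem_support.1 hw (by rw [h1, h2, add_zero])
      exact hvS (Function.mem_support.2 h2)
    · exact huS (Function.mem_support.2 h1)
  have prog_psi : ∀ t, Prog (ψ t) := fun t => ⟨hint t, hbdd t, hprog t⟩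
  have prog_pow : ∀ t k, Prog (fun x => ψ t x ^ (k+1)) := by
    intro t k
    induction k with
    | zero => simpa [pow_one] using prog_psi t
    | succ k ih =>
      have h1 := prog_mul _ _ (prog_psi t) ih
      have : (fun x => ψ t x * ψ t x ^ (k+1)) = fun x => ψ t x ^ (k+1+1) := by
        funext x
        rw [← pow_succ']
      rwa [this] at h1
  have claim : ∀ (s : Finset (Fin m)), s.Nonempty →
      ∀ e : Fin m → ℕ, Prog (fun x => ∏ t ∈ s, ψ t x ^ (e t + 1)) := by
    intro s hs
    induction hs using Finset.Nonempty.cons_induction with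
    | singleton a =>
      intro e
      simpa using prog_pow a (e a)
    | cons a s ha hs ih =>
      intro e
      have h1 := prog_mul _ _ (prog_pow a (e a)) (ih e)
      simp only [Finset.prod_cons]
      exact h1
  have prog_mon : ∀ n : Fin m →₀ ℕ, n ≠ 0 →
      Prog (fun x => ∏ t ∈ n.support, ψ t x ^ n t) := by
    intro n hn
    have h1 := claim n.support (Finsupp.support_nonempty_iff.2 hn) (fun t => n t - 1)
    have heq : (fun x => ∏ t ∈ n.support, ψ t x ^ ((n t - 1) + 1))
        = fun x => ∏ t ∈ n.support, ψ t x ^ n t := by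
      funext x
      apply Finset.prod_congr rfl
      intro t ht
      rw [Nat.sub_add_cancel (Nat.one_le_iff_ne_zero.2 (Finsupp.mem_support_iff.1 ht))]
    rwa [heq] at h1
  have sum_claim : ∀ s : Finset (Fin m →₀ ℕ), (∀ n ∈ s, n ≠ 0) →
      Prog (fun x => ∑ n ∈ s, P.coeff n * ∏ t ∈ n.support, ψ t x ^ n t) := by
    intro s
    induction s using Finset.induction_on with
    | empty =>
      intro _
      simpa using prog_zero
    | insert a s ha ih =>
      intro hs
      have h1 := prog_add _ _ (prog_smul (P.coeff a) _ (prog_mon a (hs a (Finset.mem_insert_self a s))))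
        (ih (fun n hn => hs n (Finset.mem_insert_of_mem hn)))
      simp only [Finset.sum_insert ha]
      exact h1
  have hfin : (fun x => MvPolynomial.eval (fun t => ψ t x) P)
      = fun x => ∑ n ∈ P.support, P.coeff n * ∏ t ∈ n.support, ψ t x ^ n t := by
    funext x
    rw [MvPolynomial.eval_eq]
  rw [hfin]
  refine (sum_claim P.support fun n hn h0 => ?_).2.2
  rw [h0] at hn
  exact MvPolynomial.mem_support_iff.1 hn hP
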